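/- In the badcodeword construction: ψ2 is a unit vector, ⟨ψ1, ψ2⟩ = p^{−k/2}, and ‖ψ1 + ψ2‖² = 2 + 2p^{−k/2}. -/

import Mathlib

open scoped BigOperators
open Matrix

/-- `omg p` is the complex primitive `p`-th root of unity `exp(2πi/p)`. -/
noncomputable def omg (p : ℕ) : ℂ := Complex.exp (2 * Real.pi * Complex.I / p)

/-- The generalized Pauli matrix `XZ(u) = X^{a_1}Z^{b_1} ⊗ ⋯ ⊗ X^{a_n}Z^{b_n}`
for `u = ((a_1,b_1),…,(a_n,b_n)) ∈ (Z_p²)ⁿ`, written out entrywise with respect to the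
computational basis of `(ℂ^p)^{⊗n} ≃ ℂ^{p^n}`, whose coordinates are indexed by
`Fin n → ZMod p`.  (It is the matrix determined by
`XZ(u) |i₁ … iₙ⟩ = ∏_t ω^{b_t i_t} |i₁+a₁, …, iₙ+aₙ⟩`.) -/
noncomputable def XZ (p n : ℕ) (u : Fin n → ZMod p × ZMod p) :
    Matrix (Fin n → ZMod p) (Fin n → ZMod p) ℂ :=
  fun j i => ∏ t : Fin n, if j t = i t + (u t).1 then omg p ^ ((u t).2 * i t).val else 0

/-- The symplectic inner product `⟨u,v⟩ = Σ b_i c_i − a_i d_i` on `Z_p^{2n}`. -/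
def symp (p n : ℕ) (u v : Fin n → ZMod p × ZMod p) : ZMod p :=
  ∑ t : Fin n, ((u t).2 * (v t).1 - (u t).1 * (v t).2)

/-- The standard Hermitian inner product on `I → ℂ`. -/
noncomputable def cinner {I : Type*} [Fintype I] (x y : I → ℂ) : ℂ :=
  ∑ i, (starRingEnd ℂ) (x i) * y i

/-!
For `x ≠ y` in `R` we have `y - x ∉ Cmax = Cmax^⊥`, so some `c ∈ Cmax` has `⟨c, y - x⟩ ≠ 0`.
Since `XZ(c) XZ(w) = ω^⟨c,w⟩ XZ(w) XZ(c)`, the vectors `XZ(x)ψ1` and `XZ(y)ψ1` are eigenvectors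
of the unitary `XZ(c)` whose eigenvalues differ by the factor `ω^⟨c,y-x⟩ ≠ 1`, hence orthogonal.
So `(XZ(x)ψ1)_{x ∈ R}` is orthonormal, and `|R| = |C^⊥| / |Cmax| = p^(n+k) / p^n = p^k`.
Everything then follows by expanding `ψ2`, using `XZ(0)ψ1 = ψ1`.
-/

section Cinner
variable {I : Type*} [Fintype I]

lemma cinner_smul_left (a : ℂ) (x y : I → ℂ) :
    cinner (a • x) y = starRingEnd ℂ a * cinner x y := by
  simp [cinner, Finset.mul_sum, mul_assoc]

lemma cinner_smul_right (a : ℂ) (x y : I → ℂ) : cinner x (a • y) = a * cinner x y := by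
  simp only [cinner, Pi.smul_apply, smul_eq_mul, Finset.mul_sum]
  exact Finset.sum_congr rfl fun _ _ => mul_left_comm _ _ _

lemma cinner_add_left (x x' y : I → ℂ) : cinner (x + x') y = cinner x y + cinner x' y := by
  simp [cinner, add_mul, Finset.sum_add_distrib]

lemma cinner_add_right (x y y' : I → ℂ) : cinner x (y + y') = cinner x y + cinner x y' := by
  simp [cinner, mul_add, Finset.sum_add_distrib]

lemma cinner_sum_left {ι : Type*} (s : Finset ι) (f : ι → I → ℂ) (y : I → ℂ) :
    cinner (∑ i ∈ s, f i) y = ∑ i ∈ s, cinner (f i) y := by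
  simp only [cinner, Finset.sum_apply, map_sum, Finset.sum_mul]
  exact Finset.sum_comm

lemma cinner_sum_right {ι : Type*} (s : Finset ι) (x : I → ℂ) (f : ι → I → ℂ) :
    cinner x (∑ i ∈ s, f i) = ∑ i ∈ s, cinner x (f i) := by
  simp only [cinner, Finset.sum_apply, Finset.mul_sum]
  exact Finset.sum_comm

lemma cinner_conj_symm (x y : I → ℂ) : starRingEnd ℂ (cinner x y) = cinner y x := by
  simp [cinner, mul_comm]

lemma cinner_eq_zero_of_eigenvalue_ne {f : (I → ℂ) → I → ℂ}
    (hf : ∀ v w, cinner (f v) (f w) = cinner v w) {v w : I → ℂ} {a μ : ℂ}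
    (hv : f v = a • v) (hw : f w = (μ * a) • w) (hvv : cinner v v ≠ 0) (hμ : μ ≠ 1) :
    cinner v w = 0 := by
  have ha : starRingEnd ℂ a * a = 1 := by
    have h := hf v v
    rw [hv, cinner_smul_left, cinner_smul_right, ← mul_assoc] at h
    exact (mul_eq_right₀ hvv).mp h
  have h := hf v w
  rw [hv, hw, cinner_smul_left, cinner_smul_right] at h
  have hvw : (μ - 1) * cinner v w = 0 := by linear_combination h - μ * cinner v w * ha
  exact (mul_eq_zero.mp hvw).resolve_left (sub_ne_zero.mpr hμ)

variable {ι : Type*} [DecidableEq ι] {f : ι → I → ℂ} {s : Finset ι}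

lemma cinner_sum_of_orthonormal
    (hf : ∀ x ∈ s, ∀ y ∈ s, cinner (f x) (f y) = if x = y then 1 else 0) {x : ι} (hx : x ∈ s) :
    cinner (f x) (∑ y ∈ s, f y) = 1 := by
  rw [cinner_sum_right, Finset.sum_congr rfl (hf x hx), Finset.sum_ite_eq, if_pos hx]

lemma cinner_sum_sum_of_orthonormal
    (hf : ∀ x ∈ s, ∀ y ∈ s, cinner (f x) (f y) = if x = y then 1 else 0) :
    cinner (∑ x ∈ s, f x) (∑ y ∈ s, f y) = s.card := by
  rw [cinner_sum_left, Finset.sum_congr rfl fun x hx => cinner_sum_of_orthonormal hf hx]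
  simp

end Cinner

section CosetReps
variable {K V : Type*} [Ring K] [AddCommGroup V] [Module K V]

def IsCosetReps (S : Finset V) (N M : Submodule K V) : Prop :=
  (∀ x ∈ S, x ∈ M) ∧ ∀ v ∈ M, ∃! x, x ∈ S ∧ v - x ∈ N

variable {S : Finset V} {N M : Submodule K V}

lemma IsCosetReps.sub_notMem (hS : IsCosetReps S N M) {x y : V} (hx : x ∈ S) (hy : y ∈ S)
    (hxy : x ≠ y) : y - x ∉ N := fun hyx =>
  hxy ((hS.2 y (hS.1 y hy)).unique ⟨hx, hyx⟩ ⟨hy, by simp⟩)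

lemma IsCosetReps.card_mul_natCard (hS : IsCosetReps S N M) (hNM : N ≤ M) :
    S.card * Nat.card N = Nat.card M := by
  let add : S × N → M := fun xc => ⟨xc.1 + xc.2, M.add_mem (hS.1 _ xc.1.2) (hNM xc.2.2)⟩
  have hadd : Function.Bijective add := by
    refine ⟨fun ⟨x, c⟩ ⟨x', c'⟩ h => ?_, fun v => ?_⟩
    · have hv := congrArg Subtype.val h
      simp only [add] at hv
      have hxx' : x.1 - x'.1 ∈ N := by
        rw [show x.1 - x'.1 = c'.1 - c.1 by rw [sub_eq_sub_iff_add_eq_add, hv, add_comm]]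
        exact N.sub_mem c'.2 c.2
      obtain ⟨z, _, hz⟩ := hS.2 _ (hS.1 _ x.2)
      have hx : x.1 = x'.1 := (hz x ⟨x.2, by simp⟩).trans (hz x' ⟨x'.2, hxx'⟩).symm
      rw [hx, add_right_inj] at hv
      exact Prod.ext (Subtype.ext hx) (Subtype.ext hv)
    · obtain ⟨x, ⟨hxS, hvx⟩, -⟩ := hS.2 v v.2
      exact ⟨(⟨x, hxS⟩, ⟨v - x, hvx⟩), Subtype.ext (add_sub_cancel x v)⟩
  rw [← Nat.card_congr (Equiv.ofBijective add hadd), Nat.card_prod, Nat.card_eq_finsetCard]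

end CosetReps

section Symplectic
variable (p n : ℕ)

noncomputable def sympForm : LinearMap.BilinForm (ZMod p) (Fin n → ZMod p × ZMod p) :=
  LinearMap.mk₂ (ZMod p) (symp p n)
    (fun _ _ _ => by
      simp only [symp, ← Finset.sum_add_distrib]
      exact Finset.sum_congr rfl fun _ _ => by simp; ring)
    (fun _ _ _ => by
      simp only [symp, Finset.smul_sum]
      exact Finset.sum_congr rfl fun _ _ => by simp; ring)
    (fun _ _ _ => by
      simp only [symp, ← Finset.sum_add_distrib]
      exact Finset.sum_congr rfl fun _ _ => by simp; ring)
    (fun _ _ _ => by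
      simp only [symp, Finset.smul_sum]
      exact Finset.sum_congr rfl fun _ _ => by simp; ring)

variable {p n}

@[simp]
lemma sympForm_apply (u v : Fin n → ZMod p × ZMod p) : sympForm p n u v = symp p n u v := rfl

lemma sympForm_nondegenerate : (sympForm p n).Nondegenerate := by
  have hrefl : (sympForm p n).IsRefl := LinearMap.IsAlt.isRefl fun u => by
    simp [symp, mul_comm]
  refine hrefl.nondegenerate_iff_separatingLeft.mpr fun u hu => funext fun t => ?_
  have h1 := hu (Pi.single t (1, 0))
  have h2 := hu (Pi.single t (0, 1))
  simp [symp, Pi.single_apply, apply_ite] at h1 h2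
  exact Prod.ext h2 h1

variable [Fact p.Prime]

lemma finrank_orthogonal_sympForm (W : Submodule (ZMod p) (Fin n → ZMod p × ZMod p)) :
    Module.finrank (ZMod p) ((sympForm p n).orthogonal W) =
      2 * n - Module.finrank (ZMod p) W := by
  rw [LinearMap.BilinForm.finrank_orthogonal sympForm_nondegenerate, Module.finrank_pi_fintype]
  simp [Module.finrank_prod, mul_comm]

lemma finrank_eq_of_orthogonal_sympForm_eq {W : Submodule (ZMod p) (Fin n → ZMod p × ZMod p)}
    (hW : (sympForm p n).orthogonal W = W) : Module.finrank (ZMod p) W = n := by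
  have h := finrank_orthogonal_sympForm W
  rw [hW] at h
  omega

end Symplectic

lemma AddChar.map_sum_eq_prod {ι A M : Type*} [AddCommMonoid A] [CommMonoid M]
    (ψ : AddChar A M) (s : Finset ι) (f : ι → A) : ψ (∑ i ∈ s, f i) = ∏ i ∈ s, ψ (f i) := by
  classical
  induction s using Finset.induction_on with
  | empty => simp
  | insert a s ha ih => rw [Finset.sum_insert ha, Finset.prod_insert ha, ψ.map_add_eq_mul, ih]

open ZMod in
lemma omg_pow_val_eq_stdAddChar (p : ℕ) [NeZero p] (z : ZMod p) : omg p ^ z.val = stdAddChar z := by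
  rw [stdAddChar_apply, toCircle_apply, omg, ← Complex.exp_nat_mul]
  congr 1
  ring

section Pauli
variable {p n : ℕ} [NeZero p]
open ZMod

lemma XZ_mulVec_apply (u : Fin n → ZMod p × ZMod p) (ψ : (Fin n → ZMod p) → ℂ)
    (j : Fin n → ZMod p) :
    (XZ p n u *ᵥ ψ) j =
      stdAddChar ((Prod.snd ∘ u) ⬝ᵥ (j - Prod.fst ∘ u)) * ψ (j - Prod.fst ∘ u) := by
  rw [mulVec, dotProduct, Finset.sum_eq_single (j - Prod.fst ∘ u)]
  · simp only [XZ, Pi.sub_apply, Function.comp_apply, sub_add_cancel, if_true,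
      omg_pow_val_eq_stdAddChar, dotProduct, ← AddChar.map_sum_eq_prod]
  · intro i _ hi
    obtain ⟨t, ht⟩ : ∃ t, j t ≠ i t + (u t).1 := by
      by_contra! h
      exact hi (funext fun t => by simp [h t])
    rw [XZ, Finset.prod_eq_zero (Finset.mem_univ t) (if_neg ht), zero_mul]
  · simp

lemma XZ_zero_mulVec (ψ : (Fin n → ZMod p) → ℂ) : XZ p n 0 *ᵥ ψ = ψ := by
  funext j
  simp [XZ_mulVec_apply]

lemma cinner_XZ_mulVec (u : Fin n → ZMod p × ZMod p) (ψ φ : (Fin n → ZMod p) → ℂ) :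
    cinner (XZ p n u *ᵥ ψ) (XZ p n u *ᵥ φ) = cinner ψ φ := by
  simp only [cinner, XZ_mulVec_apply, map_mul]
  rw [← Equiv.sum_comp (Equiv.addRight (Prod.fst ∘ u))]
  refine Finset.sum_congr rfl fun i _ => ?_
  rw [Equiv.coe_addRight, add_sub_cancel_right, ← AddChar.map_neg_eq_conj, mul_mul_mul_comm,
    ← AddChar.map_add_eq_mul, neg_add_cancel, AddChar.map_zero_eq_one, one_mul]

lemma XZ_mulVec_XZ_mulVec (c w : Fin n → ZMod p × ZMod p) (ψ : (Fin n → ZMod p) → ℂ) :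
    XZ p n c *ᵥ (XZ p n w *ᵥ ψ) = stdAddChar (symp p n c w) • XZ p n w *ᵥ (XZ p n c *ᵥ ψ) := by
  funext j
  simp only [XZ_mulVec_apply, Pi.smul_apply, smul_eq_mul, sub_sub, add_comm (Prod.fst ∘ w)]
  rw [← mul_assoc, ← mul_assoc, ← mul_assoc, ← AddChar.map_add_eq_mul, ← AddChar.map_add_eq_mul,
    ← AddChar.map_add_eq_mul]
  congr 2
  simp only [symp, dotProduct, Pi.sub_apply, Pi.add_apply, Function.comp_apply,
    ← Finset.sum_add_distrib]
  exact Finset.sum_congr rfl fun t _ => by ring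

lemma XZ_mulVec_XZ_mulVec_of_eigen {c x : Fin n → ZMod p × ZMod p} {ψ : (Fin n → ZMod p) → ℂ}
    {lam : ℂ} (hc : XZ p n c *ᵥ ψ = lam • ψ) :
    XZ p n c *ᵥ (XZ p n x *ᵥ ψ) = (stdAddChar (symp p n c x) * lam) • XZ p n x *ᵥ ψ := by
  rw [XZ_mulVec_XZ_mulVec, hc, mulVec_smul, smul_smul]

lemma cinner_XZ_mulVec_eq_zero {c x y : Fin n → ZMod p × ZMod p} {ψ : (Fin n → ZMod p) → ℂ}
    {lam : ℂ} (hψ : cinner ψ ψ ≠ 0) (hc : XZ p n c *ᵥ ψ = lam • ψ)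
    (hxy : symp p n c x ≠ symp p n c y) :
    cinner (XZ p n x *ᵥ ψ) (XZ p n y *ᵥ ψ) = 0 := by
  refine cinner_eq_zero_of_eigenvalue_ne (cinner_XZ_mulVec c) (XZ_mulVec_XZ_mulVec_of_eigen hc)
    (μ := stdAddChar (symp p n c y - symp p n c x)) ?_ (by rwa [cinner_XZ_mulVec]) ?_
  · rw [XZ_mulVec_XZ_mulVec_of_eigen hc, ← mul_assoc, ← AddChar.map_add_eq_mul, sub_add_cancel]
  · rw [← (stdAddChar (N := p)).map_zero_eq_one, injective_stdAddChar.ne_iff, sub_ne_zero]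
    exact hxy.symm

end Pauli

section Badcodeword
variable {p n : ℕ}

lemma card_eq_pow_of_isCosetReps [Fact p.Prime] {k : ℕ}
    {C Cmax : Submodule (ZMod p) (Fin n → ZMod p × ZMod p)}
    {R : Finset (Fin n → ZMod p × ZMod p)} (hkn : k ≤ n) (hdimC : Module.finrank (ZMod p) C = n - k)
    (hCmax : (sympForm p n).orthogonal Cmax = Cmax) (hle : Cmax ≤ (sympForm p n).orthogonal C)
    (hR : IsCosetReps R Cmax ((sympForm p n).orthogonal C)) :
    R.card = p ^ k := by
  have h := hR.card_mul_natCard hle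
  rw [Module.natCard_eq_pow_finrank (K := ZMod p) (V := Cmax),
    Module.natCard_eq_pow_finrank (K := ZMod p) (V := (sympForm p n).orthogonal C),
    Nat.card_zmod, finrank_eq_of_orthogonal_sympForm_eq hCmax, finrank_orthogonal_sympForm, hdimC,
    show 2 * n - (n - k) = k + n by omega, pow_add] at h
  exact Nat.eq_of_mul_eq_mul_right (pow_pos (Fact.out : p.Prime).pos n) h

lemma cinner_XZ_mulVec_of_isCosetReps [NeZero p]
    {Cmax M : Submodule (ZMod p) (Fin n → ZMod p × ZMod p)}
    (hCmax : (sympForm p n).orthogonal Cmax ≤ Cmax) {R : Finset (Fin n → ZMod p × ZMod p)}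
    (hR : IsCosetReps R Cmax M) {ψ : (Fin n → ZMod p) → ℂ} (hψ : cinner ψ ψ = 1)
    (heig : ∀ c ∈ Cmax, ∃ lam : ℂ, XZ p n c *ᵥ ψ = lam • ψ) :
    ∀ x ∈ R, ∀ y ∈ R, cinner (XZ p n x *ᵥ ψ) (XZ p n y *ᵥ ψ) = if x = y then 1 else 0 := by
  intro x hx y hy
  split_ifs with hxy
  · rw [hxy, cinner_XZ_mulVec, hψ]
  obtain ⟨c, hc, hcyx⟩ : ∃ c ∈ Cmax, symp p n c (y - x) ≠ 0 := by
    by_contra! h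
    exact hR.sub_notMem hx hy hxy (hCmax h)
  obtain ⟨lam, hlam⟩ := heig c hc
  refine cinner_XZ_mulVec_eq_zero (hψ ▸ one_ne_zero) hlam fun h => hcyx ?_
  rw [← sympForm_apply, map_sub, sympForm_apply, sympForm_apply, h, sub_self]

end Badcodeword

theorem badcodeword_psi2_general (p n k : ℕ) [Fact p.Prime]
    (C Cmax : Submodule (ZMod p) (Fin n → ZMod p × ZMod p))
    (hkn : k ≤ n)
    (hdimC : Module.finrank (ZMod p) C = n - k)
    (hsub : ∀ u ∈ Cmax, ∀ c ∈ C, symp p n c u = 0)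
    (hmax : ∀ u, u ∈ Cmax ↔ ∀ c ∈ Cmax, symp p n c u = 0)
    (ψ1 : (Fin n → ZMod p) → ℂ) (hψ1 : cinner ψ1 ψ1 = 1)
    (heig : ∀ c ∈ Cmax, ∃ lam : ℂ, XZ p n c *ᵥ ψ1 = lam • ψ1)
    (R : Finset (Fin n → ZMod p × ZMod p)) (h0R : 0 ∈ R)
    (hRsub : ∀ x ∈ R, ∀ c ∈ C, symp p n c x = 0)
    (hRrep : ∀ v : Fin n → ZMod p × ZMod p, (∀ c ∈ C, symp p n c v = 0) →
      ∃! x, x ∈ R ∧ v - x ∈ Cmax)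
    (ψ2 : (Fin n → ZMod p) → ℂ)
    (hψ2 : ψ2 = ((Real.sqrt (p ^ k) : ℝ) : ℂ)⁻¹ • ∑ x ∈ R, XZ p n x *ᵥ ψ1) :
    cinner ψ2 ψ2 = 1 ∧
      cinner ψ1 ψ2 = ((Real.sqrt (p ^ k) : ℝ) : ℂ)⁻¹ ∧
      cinner (ψ1 + ψ2) (ψ1 + ψ2) = 2 + 2 * ((Real.sqrt (p ^ k) : ℝ) : ℂ)⁻¹ := by
  classical
  have hCmax : (sympForm p n).orthogonal Cmax = Cmax := Submodule.ext fun u => (hmax u).symm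
  have hR : IsCosetReps R Cmax ((sympForm p n).orthogonal C) := ⟨hRsub, hRrep⟩
  have hcard := card_eq_pow_of_isCosetReps hkn hdimC hCmax hsub hR
  have hON := cinner_XZ_mulVec_of_isCosetReps hCmax.le hR hψ1 heig
  set s : ℂ := ((Real.sqrt (p ^ k) : ℝ) : ℂ)
  have hconj : starRingEnd ℂ s⁻¹ = s⁻¹ := by simp [s]
  have hs : s⁻¹ * (s⁻¹ * ((p ^ k : ℕ) : ℂ)) = 1 := by
    rw [← mul_assoc, ← mul_inv, ← Complex.ofReal_mul, Real.mul_self_sqrt (by positivity)]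
    push_cast
    exact inv_mul_cancel₀ (pow_ne_zero k (Nat.cast_ne_zero.mpr (Fact.out : p.Prime).ne_zero))
  have h22 : cinner ψ2 ψ2 = 1 := by
    rw [hψ2, cinner_smul_left, cinner_smul_right, cinner_sum_sum_of_orthonormal hON, hcard, hconj,
      hs]
  have h12 : cinner ψ1 ψ2 = s⁻¹ := by
    have h := cinner_sum_of_orthonormal hON h0R
    rw [XZ_zero_mulVec] at h
    rw [hψ2, cinner_smul_right, h, mul_one]
  have h21 : cinner ψ2 ψ1 = s⁻¹ := by rw [← cinner_conj_symm, h12, hconj]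
  refine ⟨h22, h12, ?_⟩
  rw [cinner_add_left, cinner_add_right, cinner_add_right, hψ1, h12, h21, h22]
  ring

/-- In the badcodeword construction: `ψ2` is a unit vector, `⟨ψ1,ψ2⟩ = p^{−k/2}`,
and `‖ψ1 + ψ2‖² = 2 + 2 p^{−k/2}`. -/
theorem badcodeword_psi2 (p n k : ℕ) [Fact p.Prime]
    (C Cmax : Submodule (ZMod p) (Fin n → ZMod p × ZMod p))
    (hkn : k ≤ n)
    (hdimC : Module.finrank (ZMod p) C = n - k)
    (hCself : ∀ u ∈ C, ∀ c ∈ C, symp p n c u = 0)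
    (hCsub : C ≤ Cmax)
    (hsub : ∀ u ∈ Cmax, ∀ c ∈ C, symp p n c u = 0)
    (hmax : ∀ u, u ∈ Cmax ↔ ∀ c ∈ Cmax, symp p n c u = 0)
    (ψ1 : (Fin n → ZMod p) → ℂ) (hψ1 : cinner ψ1 ψ1 = 1)
    (heig : ∀ c ∈ Cmax, ∃ lam : ℂ, XZ p n c *ᵥ ψ1 = lam • ψ1)
    (R : Finset (Fin n → ZMod p × ZMod p)) (h0R : 0 ∈ R)
    (hRsub : ∀ x ∈ R, ∀ c ∈ C, symp p n c x = 0)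
    (hRrep : ∀ v : Fin n → ZMod p × ZMod p, (∀ c ∈ C, symp p n c v = 0) →
      ∃! x, x ∈ R ∧ v - x ∈ Cmax)
    (ψ2 : (Fin n → ZMod p) → ℂ)
    (hψ2 : ψ2 = ((Real.sqrt (p ^ k) : ℝ) : ℂ)⁻¹ • ∑ x ∈ R, XZ p n x *ᵥ ψ1) :
    cinner ψ2 ψ2 = 1 ∧
      cinner ψ1 ψ2 = ((Real.sqrt (p ^ k) : ℝ) : ℂ)⁻¹ ∧
      cinner (ψ1 + ψ2) (ψ1 + ψ2) = 2 + 2 * ((Real.sqrt (p ^ k) : ℝ) : ℂ)⁻¹ :=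
  badcodeword_psi2_general p n k C Cmax hkn hdimC hsub hmax ψ1 hψ1 heig R h0R hRsub hRrep ψ2 hψ2
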